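/- arXiv:2102.01752 — 4 statements merged into one kernel-verified Lean document; each statement's English description precedes it below -/
import Mathlib

section
/- Theorem 1 (main error bound). Let {ψₙ*} (n = 1,…,N) be optimal congruent potentials for (P₁,…,P_N; α₁,…,α_N; P̄). Let B ∈ (0,∞) and let ψ₁,…,ψ_N : ℝ^D → ℝ be B-smooth differentiable convex functions whose convex conjugates ψ̄ₙ are differentiable, (1/B)-strongly convex, and satisfy ∇ψ̄ₙ(∇ψₙ(x)) = x for all x ∈ ℝ^D. Set Δ = Σₙ αₙ ∫ ψₙ dPₙ − Σₙ αₙ ∫ ψₙ* dPₙ. Then Δ + ∫ (Σₙ αₙ ψ̄ₙ(y) − ‖y‖²/2) dP̄(y) ≥ (1/(2B)) Σₙ αₙ ∫ ‖∇ψₙ*(x) − ∇ψₙ(x)‖² dPₙ(x). -/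
open MeasureTheory RealInnerProductSpace
open scoped Gradient

/-!
Fix `n` and `x`. The Fenchel–Young equality `ψ̄ₙ*(∇ψₙ* x) = ⟪x, ∇ψₙ* x⟫ - ψₙ* x`, the Young
inequality `ψ̄ₙ(∇ψₙ x) ≥ ⟪x, ∇ψₙ x⟫ - ψₙ x` and the `1/B`-strong convexity of `ψ̄ₙ` around
`∇ψₙ x`, at which `∇ψ̄ₙ` takes the value `x`, combine to
`ψₙ* x - ψₙ x + ‖∇ψₙ* x - ∇ψₙ x‖² / (2B) ≤ (ψ̄ₙ - ψ̄ₙ*)(∇ψₙ* x)`.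
Integrating against `Pₙ`, pushing the right-hand side forward to `P̄` along `∇ψₙ*` and summing
with weights `αₙ`, congruence `Σ αₙ ψ̄ₙ* = ‖·‖²/2` turns the right-hand sides into
`∫ (Σ αₙ ψ̄ₙ - ‖y‖²/2) dP̄`.
-/

section NormedSpace

variable {E : Type*} [NormedAddCommGroup E] [NormedSpace ℝ E]

theorem ConvexOn.add_fderiv_le {f : E → ℝ} {f' : E →L[ℝ] ℝ} {x : E}
    (hf : ConvexOn ℝ Set.univ f) (hx : HasFDerivAt f f' x) (y : E) :
    f x + f' (y - x) ≤ f y := by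
  have hline : ConvexOn ℝ Set.univ (f ∘ (AffineMap.lineMap x y : ℝ →ᵃ[ℝ] E)) := by
    simpa using hf.comp_affineMap (AffineMap.lineMap x y)
  have hderiv : HasDerivAt (f ∘ (AffineMap.lineMap x y : ℝ →ᵃ[ℝ] E)) (f' (y - x)) 0 :=
    hx.comp_hasDerivAt_of_eq (0 : ℝ) AffineMap.hasDerivAt_lineMap
      (AffineMap.lineMap_apply_zero x y).symm
  have hslope := hline.le_slope_of_hasDerivAt (Set.mem_univ 0) (Set.mem_univ 1) one_pos hderiv
  simp only [slope_def_field, Function.comp_apply, AffineMap.lineMap_apply_zero,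
    AffineMap.lineMap_apply_one, sub_zero, div_one] at hslope
  linarith

end NormedSpace

section InnerProductSpace

variable {E : Type*} [NormedAddCommGroup E] [InnerProductSpace ℝ E]

def IsConvexConjugate (f fb : E → ℝ) : Prop :=
  ∀ y, IsLUB (Set.range fun x => ⟪x, y⟫ - f x) (fb y)

theorem IsConvexConjugate.inner_sub_le {f fb : E → ℝ} (hfb : IsConvexConjugate f fb) (x y : E) :
    ⟪x, y⟫ - f x ≤ fb y :=
  (hfb y).1 ⟨x, rfl⟩

variable [CompleteSpace E]

theorem ConvexOn.add_inner_gradient_le {f : E → ℝ} {x : E}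
    (hf : ConvexOn ℝ Set.univ f) (hx : DifferentiableAt ℝ f x) (y : E) :
    f x + ⟪∇ f x, y - x⟫ ≤ f y := by
  simpa [inner_gradient_left] using hf.add_fderiv_le hx.hasFDerivAt y

theorem ConvexOn.add_inner_gradient_add_mul_sq_le {φ : E → ℝ} {c : ℝ} {x : E}
    (hφ : ConvexOn ℝ Set.univ fun y => φ y - c * ‖y‖ ^ 2) (hx : DifferentiableAt ℝ φ x)
    (y : E) : φ x + ⟪∇ φ x, y - x⟫ + c * ‖y - x‖ ^ 2 ≤ φ y := by
  have := hφ.add_fderiv_le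
    (hx.hasFDerivAt.sub ((hasStrictFDerivAt_norm_sq x).hasFDerivAt.const_mul c)) y
  simp only [sub_apply, smul_apply, ← inner_gradient_left,
    coe_innerSL_apply, nsmul_eq_mul, Nat.cast_ofNat, smul_eq_mul] at this
  simp only [inner_sub_right, real_inner_self_eq_norm_sq, norm_sub_sq_real,
    real_inner_comm y] at this ⊢
  linarith

theorem IsConvexConjugate.apply_gradient {f fb : E → ℝ} {x : E} (hfb : IsConvexConjugate f fb)
    (hf : ConvexOn ℝ Set.univ f) (hx : DifferentiableAt ℝ f x) :
    fb (∇ f x) = ⟪x, ∇ f x⟫ - f x := by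
  refine (hfb _).unique (IsGreatest.isLUB ⟨⟨x, rfl⟩, ?_⟩)
  rintro _ ⟨z, rfl⟩
  have := hf.add_inner_gradient_le hx z
  rw [inner_sub_right, real_inner_comm x, real_inner_comm z] at this
  dsimp only
  linarith

theorem sub_add_mul_norm_gradient_sub_sq_le {f fb g gb : E → ℝ} {c : ℝ} {x : E}
    (hf : ConvexOn ℝ Set.univ f) (hfx : DifferentiableAt ℝ f x) (hfb : IsConvexConjugate f fb)
    (hgb : IsConvexConjugate g gb) (hgb_sconv : ConvexOn ℝ Set.univ fun y => gb y - c * ‖y‖ ^ 2)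
    (hgb_diff : DifferentiableAt ℝ gb (∇ g x)) (hgb_inv : ∇ gb (∇ g x) = x) :
    f x - g x + c * ‖∇ f x - ∇ g x‖ ^ 2 ≤ gb (∇ f x) - fb (∇ f x) := by
  have hstrong := hgb_sconv.add_inner_gradient_add_mul_sq_le hgb_diff (∇ f x)
  have hyoung := hgb.inner_sub_le x (∇ g x)
  rw [hgb_inv, inner_sub_right] at hstrong
  rw [hfb.apply_gradient hf hfx]
  linarith

theorem measurable_gradient [MeasurableSpace E] [BorelSpace E] (f : E → ℝ) :
    Measurable (∇ f) :=
  (InnerProductSpace.toDual ℝ E).symm.continuous.measurable.comp (measurable_fderiv ℝ f)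

theorem mul_integral_norm_gradient_sub_sq_le [MeasurableSpace E] [BorelSpace E] {μ : Measure E}
    {f fb g gb : E → ℝ} {c : ℝ}
    (hf : ConvexOn ℝ Set.univ f) (hf_diff : Differentiable ℝ f) (hfb : IsConvexConjugate f fb)
    (hgb : IsConvexConjugate g gb) (hgb_sconv : ConvexOn ℝ Set.univ fun y => gb y - c * ‖y‖ ^ 2)
    (hgb_diff : Differentiable ℝ gb) (hgb_inv : ∀ x, ∇ gb (∇ g x) = x)
    (hf_int : Integrable f μ) (hg_int : Integrable g μ)
    (hsq_int : Integrable (fun x => ‖∇ f x - ∇ g x‖ ^ 2) μ)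
    (hconj_int : Integrable (fun y => gb y - fb y) (μ.map (∇ f))) :
    c * ∫ x, ‖∇ f x - ∇ g x‖ ^ 2 ∂μ ≤
      ∫ x, g x ∂μ - ∫ x, f x ∂μ + ∫ y, gb y - fb y ∂(μ.map (∇ f)) := by
  have hmeas := (measurable_gradient f).aemeasurable (μ := μ)
  have hcomp : Integrable (fun x => gb (∇ f x) - fb (∇ f x)) μ :=
    (integrable_map_measure hconj_int.1 hmeas).1 hconj_int
  have hgf : Integrable (fun x => g x - f x) μ := hg_int.sub hf_int
  rw [integral_map hmeas hconj_int.1, ← integral_const_mul, ← integral_sub hg_int hf_int,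
    ← integral_add hgf hcomp]
  refine integral_mono (hsq_int.const_mul c) (hgf.add hcomp) fun x => ?_
  have := sub_add_mul_norm_gradient_sub_sq_le hf (hf_diff x) hfb hgb hgb_sconv
    (hgb_diff _) (hgb_inv x)
  dsimp only
  linarith

end InnerProductSpace

section Integrability

variable {X : Type*} [MeasurableSpace X] {μ : Measure X}

theorem MeasureTheory.Integrable.min_zero_of_le {f g : X → ℝ} (hg : Integrable g μ)
    (hf : AEStronglyMeasurable f μ) (hgf : g ≤ᵐ[μ] f) :
    Integrable (fun x => min (f x) 0) μ := by
  refine hg.abs.mono' (hf.inf aestronglyMeasurable_const) ?_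
  filter_upwards [hgf] with x hx
  rw [Real.norm_eq_abs, abs_le]
  exact ⟨le_min (by linarith [neg_abs_le (g x)]) (by linarith [abs_nonneg (g x)]),
    (min_le_right _ _).trans (abs_nonneg _)⟩

theorem MeasureTheory.Integrable.of_weighted_sum {ι : Type*} [Fintype ι] {α : ι → ℝ}
    {f h : ι → X → ℝ} (hα : ∀ i, 0 < α i) (hf : ∀ i, AEStronglyMeasurable (f i) μ)
    (hh : ∀ i, Integrable (h i) μ) (hhf : ∀ i, h i ≤ᵐ[μ] f i) (hsum : Integrable (fun x => ∑ i, α i * f i x) μ) (i : ι) :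
    Integrable (f i) μ := by
  have hgap : Integrable (fun x => ∑ j, α j * (f j x - h j x)) μ := by
    refine (hsum.sub (integrable_finsetSum Finset.univ fun j _ => (hh j).const_mul (α j))).congr
      (ae_of_all _ fun x => ?_)
    simp only [Pi.sub_apply, mul_sub, Finset.sum_sub_distrib]
  have hgap_i : Integrable (fun x => α i * (f i x - h i x)) μ := by
    refine hgap.mono' (((hf i).sub (hh i).1).const_mul (α i)) ?_
    filter_upwards [ae_all_iff.2 hhf] with x hx
    have hnonneg : ∀ j, 0 ≤ α j * (f j x - h j x) := fun j =>
      mul_nonneg (hα j).le (sub_nonneg.2 (hx j))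
    rw [Real.norm_of_nonneg (hnonneg i)]
    exact Finset.single_le_sum (fun j _ => hnonneg j) (Finset.mem_univ i)
  refine ((hh i).add (hgap_i.const_mul (α i)⁻¹)).congr (ae_of_all _ fun x => ?_)
  simp [(hα i).ne']

end Integrability

theorem barycenter_main_error_bound_general {D N : ℕ}
    (P : Fin N → Measure (EuclideanSpace ℝ (Fin D)))
    (Pbar : Measure (EuclideanSpace ℝ (Fin D)))
    (α : Fin N → ℝ) (hα : ∀ n, 0 < α n)
    -- optimal congruent potentials ψₙ* with conjugates ψ̄ₙ*
    (ψs ψbs : Fin N → EuclideanSpace ℝ (Fin D) → ℝ)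
    (hψs_conv : ∀ n, ConvexOn ℝ Set.univ (ψs n))
    (hψs_diff : ∀ n, Differentiable ℝ (ψs n))
    (hψbs_diff : ∀ n, Differentiable ℝ (ψbs n))
    (hψbs_conj : ∀ n y, IsLUB (Set.range fun x => ⟪x, y⟫ - ψs n x) (ψbs n y))
    (hpush : ∀ n, (P n).map (gradient (ψs n)) = Pbar)
    (hcong : ∀ y, ∑ n, α n * ψbs n y = ‖y‖ ^ 2 / 2)
    -- candidate potentials ψₙ with conjugates ψ̄ₙ
    (B : ℝ)
    (ψ ψb : Fin N → EuclideanSpace ℝ (Fin D) → ℝ)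
    (hψb_diff : ∀ n, Differentiable ℝ (ψb n))
    (hψb_conj : ∀ n y, IsLUB (Set.range fun x => ⟪x, y⟫ - ψ n x) (ψb n y))
    (hψb_sconv : ∀ n, ConvexOn ℝ Set.univ (fun y => ψb n y - (1 / B) / 2 * ‖y‖ ^ 2))
    (hψb_inv : ∀ n x, gradient (ψb n) (gradient (ψ n) x) = x)
    -- integrability of the stated integrals
    (hint1 : ∀ n, Integrable (ψ n) (P n))
    (hint2 : ∀ n, Integrable (ψs n) (P n))
    (hint3 : Integrable (fun y => ∑ n, α n * ψb n y - ‖y‖ ^ 2 / 2) Pbar)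
    (hint4 : ∀ n, Integrable (fun x => ‖gradient (ψs n) x - gradient (ψ n) x‖ ^ 2) (P n)) :
    ((∑ n, α n * ∫ x, ψ n x ∂(P n)) - ∑ n, α n * ∫ x, ψs n x ∂(P n)) +
        ∫ y, (∑ n, α n * ψb n y - ‖y‖ ^ 2 / 2) ∂Pbar ≥
      (1 / (2 * B)) * ∑ n, α n * ∫ x, ‖gradient (ψs n) x - gradient (ψ n) x‖ ^ 2 ∂(P n) := by
  set v : Fin N → EuclideanSpace ℝ (Fin D) → ℝ := fun n y => ψb n y - ψbs n y with hv
  have hv_cont (n : Fin N) : Continuous (v n) :=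
    (hψb_diff n).continuous.sub (hψbs_diff n).continuous
  have hsum_v (y) : ∑ n, α n * ψb n y - ‖y‖ ^ 2 / 2 = ∑ n, α n * v n y := by
    simp only [hv, mul_sub, Finset.sum_sub_distrib, hcong]
  have hv_min_int (n : Fin N) : Integrable (fun y => min (v n y) 0) Pbar := by
    have hmeas := measurable_gradient (ψs n)
    rw [← hpush n, integrable_map_measure ((hv_cont n).min continuous_const).aestronglyMeasurable
      hmeas.aemeasurable]
    exact (((hint2 n).sub (hint1 n)).add ((hint4 n).const_mul (1 / B / 2))).min_zero_of_le
      ((hv_cont n).measurable.comp hmeas).aestronglyMeasurable (ae_of_all _ fun x =>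
        sub_add_mul_norm_gradient_sub_sq_le (hψs_conv n) (hψs_diff n x) (hψbs_conj n)
          (hψb_conj n) (hψb_sconv n) (hψb_diff n _) (hψb_inv n x))
  -- Only `∑ n, α n * v n` is assumed integrable; the pointwise bound controls each negative part.
  have hv_int : ∀ n, Integrable (v n) Pbar :=
    Integrable.of_weighted_sum hα (fun n => (hv_cont n).aestronglyMeasurable) hv_min_int
      (fun n => ae_of_all _ fun y => min_le_left _ _) (hint3.congr (ae_of_all _ hsum_v))
  have hn (n : Fin N) : 1 / B / 2 * ∫ x, ‖∇ (ψs n) x - ∇ (ψ n) x‖ ^ 2 ∂(P n) ≤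
      ∫ x, ψ n x ∂(P n) - ∫ x, ψs n x ∂(P n) + ∫ y, v n y ∂Pbar := by
    rw [← hpush n]
    exact mul_integral_norm_gradient_sub_sq_le (hψs_conv n) (hψs_diff n) (hψbs_conj n)
      (hψb_conj n) (hψb_sconv n) (hψb_diff n) (hψb_inv n)
      (hint2 n) (hint1 n) (hint4 n) (hpush n ▸ hv_int n)
  rw [ge_iff_le, integral_congr_ae (ae_of_all _ hsum_v),
    integral_finsetSum _ fun n _ => (hv_int n).const_mul _, Finset.mul_sum]
  calc ∑ n, 1 / (2 * B) * (α n * ∫ x, ‖∇ (ψs n) x - ∇ (ψ n) x‖ ^ 2 ∂(P n))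
      = ∑ n, α n * (1 / B / 2 * ∫ x, ‖∇ (ψs n) x - ∇ (ψ n) x‖ ^ 2 ∂(P n)) :=
        Finset.sum_congr rfl fun n _ => by ring
    _ ≤ ∑ n, α n * (∫ x, ψ n x ∂(P n) - ∫ x, ψs n x ∂(P n) + ∫ y, v n y ∂Pbar) :=
        Finset.sum_le_sum fun n _ => mul_le_mul_of_nonneg_left (hn n) (hα n).le
    _ = _ := by
        simp only [mul_add, mul_sub, Finset.sum_add_distrib, Finset.sum_sub_distrib,
          integral_const_mul]

/-- Theorem 1 (main error bound). For optimal congruent potentials `{ψₙ*}` and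
`B`-smooth differentiable convex candidates `{ψₙ}` with differentiable
`(1/B)`-strongly convex conjugates `{ψ̄ₙ}` satisfying `∇ψ̄ₙ (∇ψₙ x) = x`,
with `Δ = Σₙ αₙ ∫ ψₙ dPₙ − Σₙ αₙ ∫ ψₙ* dPₙ`,
`Δ + ∫ (Σₙ αₙ ψ̄ₙ(y) − ‖y‖²/2) dP̄ ≥ (1/(2B)) Σₙ αₙ ∫ ‖∇ψₙ* − ∇ψₙ‖² dPₙ`. -/
theorem barycenter_main_error_bound {D N : ℕ}
    (P : Fin N → Measure (EuclideanSpace ℝ (Fin D)))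
    (Pbar : Measure (EuclideanSpace ℝ (Fin D)))
    [∀ n, IsProbabilityMeasure (P n)] [IsProbabilityMeasure Pbar]
    (α : Fin N → ℝ) (hα : ∀ n, 0 < α n) (hαsum : ∑ n, α n = 1)
    -- optimal congruent potentials ψₙ* with conjugates ψ̄ₙ*
    (ψs ψbs : Fin N → EuclideanSpace ℝ (Fin D) → ℝ)
    (hψs_conv : ∀ n, ConvexOn ℝ Set.univ (ψs n))
    (hψs_diff : ∀ n, Differentiable ℝ (ψs n))
    (hψbs_diff : ∀ n, Differentiable ℝ (ψbs n))
    (hψbs_conj : ∀ n y, IsLUB (Set.range fun x => ⟪x, y⟫ - ψs n x) (ψbs n y))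
    (hpush : ∀ n, (P n).map (gradient (ψs n)) = Pbar)
    (hsinv : ∀ n x, gradient (ψbs n) (gradient (ψs n) x) = x)
    (hcong : ∀ y, ∑ n, α n * ψbs n y = ‖y‖ ^ 2 / 2)
    (hcongGrad : ∀ y, ∑ n, α n • gradient (ψbs n) y = y)
    -- candidate potentials ψₙ with conjugates ψ̄ₙ
    (B : ℝ) (hB : 0 < B)
    (ψ ψb : Fin N → EuclideanSpace ℝ (Fin D) → ℝ)
    (hψ_conv : ∀ n, ConvexOn ℝ Set.univ (ψ n))
    (hψ_diff : ∀ n, Differentiable ℝ (ψ n))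
    (hψ_smooth : ∀ n x y, ‖gradient (ψ n) x - gradient (ψ n) y‖ ≤ B * ‖x - y‖)
    (hψb_diff : ∀ n, Differentiable ℝ (ψb n))
    (hψb_conj : ∀ n y, IsLUB (Set.range fun x => ⟪x, y⟫ - ψ n x) (ψb n y))
    (hψb_sconv : ∀ n, ConvexOn ℝ Set.univ (fun y => ψb n y - (1 / B) / 2 * ‖y‖ ^ 2))
    (hψb_inv : ∀ n x, gradient (ψb n) (gradient (ψ n) x) = x)
    -- integrability of the stated integrals
    (hint1 : ∀ n, Integrable (ψ n) (P n))
    (hint2 : ∀ n, Integrable (ψs n) (P n))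
    (hint3 : Integrable (fun y => ∑ n, α n * ψb n y - ‖y‖ ^ 2 / 2) Pbar)
    (hint4 : ∀ n, Integrable (fun x => ‖gradient (ψs n) x - gradient (ψ n) x‖ ^ 2) (P n)) :
    ((∑ n, α n * ∫ x, ψ n x ∂(P n)) - ∑ n, α n * ∫ x, ψs n x ∂(P n)) +
        ∫ y, (∑ n, α n * ψb n y - ‖y‖ ^ 2 / 2) ∂Pbar ≥
      (1 / (2 * B)) * ∑ n, α n * ∫ x, ‖gradient (ψs n) x - gradient (ψ n) x‖ ^ 2 ∂(P n) :=
  barycenter_main_error_bound_general P Pbar α hα ψs ψbs hψs_conv hψs_diff hψbs_diff hψbs_conj hpush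
    hcong B ψ ψb hψb_diff hψb_conj hψb_sconv hψb_inv hint1 hint2 hint3 hint4
end

section
/- Corollary to Theorem 1 (non-positive congruence mismatch). Under the hypotheses of Theorem 1 (optimal congruent potentials {ψₙ*}; B-smooth differentiable convex ψₙ with differentiable (1/B)-strongly convex conjugates ψ̄ₙ satisfying ∇ψ̄ₙ(∇ψₙ(x)) = x for all x; Δ = Σₙ αₙ ∫ ψₙ dPₙ − Σₙ αₙ ∫ ψₙ* dPₙ), assume additionally that the congruence mismatch is non-positive: ∫ (Σₙ αₙ ψ̄ₙ(y) − ‖y‖²/2) dP̄(y) ≤ 0. Then Δ ≥ (1/(2B)) Σₙ αₙ ∫ ‖∇ψₙ*(x) − ∇ψₙ(x)‖² dPₙ(x), and consequently for every n ∈ {1,…,N}, ∫ ‖∇ψₙ*(x) − ∇ψₙ(x)‖² dPₙ(x) ≤ 2BΔ/αₙ. -/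
open MeasureTheory RealInnerProductSpace

/-!
For each `n` and `x`, the Fenchel–Young equalities for `ψₙ*` and `ψₙ` at `x`, together with the
`1/(2B)`-strong convexity of `ψ̄ₙ` at `∇ψₙ x` (where its gradient is `x`), give
`ψ̄ₙ*(∇ψₙ* x) − ψ̄ₙ(∇ψₙ* x) + ‖∇ψₙ* x − ∇ψₙ x‖² / (2B) ≤ ψₙ x − ψₙ* x`.
Integrate against `Pₙ`, push the first two terms forward to `P̄ = (∇ψₙ*)♯Pₙ` and sum with the
weights `αₙ`: by congruence `Σ αₙ ψ̄ₙ* = ‖·‖²/2`, so the pushed-forward terms add up to minus the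
congruence mismatch, which is nonnegative. Each `ψ̄ₙ* − ψ̄ₙ` is `P̄`-integrable because the pointwise
bound controls its positive part and the integrable weighted sum then controls its negative part.
-/

section Convex

variable {E : Type*} [NormedAddCommGroup E] [InnerProductSpace ℝ E]

theorem ConvexOn.hasFDerivAt_le_sub {f : E → ℝ} {f' : E →L[ℝ] ℝ} {z : E}
    (hf : ConvexOn ℝ Set.univ f) (hd : HasFDerivAt f f' z) (y : E) :
    f' (y - z) ≤ f y - f z := by
  have hline : HasDerivAt (f ∘ AffineMap.lineMap z y) (f' (y - z)) (0 : ℝ) := by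
    refine HasFDerivAt.comp_hasDerivAt (0 : ℝ) ?_ AffineMap.hasDerivAt_lineMap
    simpa using hd
  simpa [slope_def_field] using
    (hf.comp_affineMap (AffineMap.lineMap z y)).le_slope_of_hasDerivAt (Set.mem_univ 0)
      (Set.mem_univ 1) one_pos hline

theorem ConvexOn.hasFDerivAt_add_sq_le_sub {f : E → ℝ} {f' : E →L[ℝ] ℝ} {z : E} {c : ℝ}
    (hf : ConvexOn ℝ Set.univ fun y => f y - c * ‖y‖ ^ 2) (hd : HasFDerivAt f f' z) (y : E) :
    f' (y - z) + c * ‖y - z‖ ^ 2 ≤ f y - f z := by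
  have := hf.hasFDerivAt_le_sub (hd.sub ((hasStrictFDerivAt_norm_sq z).hasFDerivAt.const_mul c)) y
  have hsq : ‖y‖ ^ 2 = ‖z‖ ^ 2 + 2 * ⟪z, y - z⟫ + ‖y - z‖ ^ 2 := by
    rw [← norm_add_sq_real, add_sub_cancel]
  simp only [sub_apply, smul_apply, smul_eq_mul, innerSL_apply_apply, nsmul_eq_mul,
    Nat.cast_ofNat] at this
  linear_combination this - c * hsq

variable [CompleteSpace E]

theorem ConvexOn.inner_gradient_le_sub {f : E → ℝ} {z : E} (hf : ConvexOn ℝ Set.univ f)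
    (hd : DifferentiableAt ℝ f z) (y : E) : ⟪gradient f z, y - z⟫ ≤ f y - f z :=
  hf.hasFDerivAt_le_sub hd.hasGradientAt.hasFDerivAt y

theorem ConvexOn.inner_gradient_add_sq_le_sub {f : E → ℝ} {z : E} {c : ℝ}
    (hf : ConvexOn ℝ Set.univ fun y => f y - c * ‖y‖ ^ 2) (hd : DifferentiableAt ℝ f z)
    (y : E) : ⟪gradient f z, y - z⟫ + c * ‖y - z‖ ^ 2 ≤ f y - f z :=
  hf.hasFDerivAt_add_sq_le_sub hd.hasGradientAt.hasFDerivAt y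

theorem ConvexOn.conjugate_gradient_eq {f f₀ : E → ℝ} {x : E} (hf : ConvexOn ℝ Set.univ f)
    (hd : DifferentiableAt ℝ f x)
    (hconj : ∀ y, IsLUB (Set.range fun w => ⟪w, y⟫ - f w) (f₀ y)) :
    f₀ (gradient f x) = ⟪x, gradient f x⟫ - f x := by
  refine le_antisymm ((hconj _).2 ?_) ((hconj _).1 ⟨x, rfl⟩)
  rintro _ ⟨x', rfl⟩
  have := hf.inner_gradient_le_sub hd x'
  rw [inner_sub_right, real_inner_comm x', real_inner_comm x] at this
  linarith

theorem conjugate_sub_conjugate_gradient_add_sq_le {f f₀ φ φ₀ : E → ℝ} {c : ℝ} (x : E)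
    (hf : ConvexOn ℝ Set.univ f) (hfd : DifferentiableAt ℝ f x)
    (hf₀ : ∀ y, IsLUB (Set.range fun w => ⟪w, y⟫ - f w) (f₀ y))
    (hφ : ConvexOn ℝ Set.univ φ) (hφd : DifferentiableAt ℝ φ x)
    (hφ₀ : ∀ y, IsLUB (Set.range fun w => ⟪w, y⟫ - φ w) (φ₀ y))
    (hφ₀c : ConvexOn ℝ Set.univ fun y => φ₀ y - c * ‖y‖ ^ 2)
    (hφ₀d : DifferentiableAt ℝ φ₀ (gradient φ x)) (hinv : gradient φ₀ (gradient φ x) = x) :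
    f₀ (gradient f x) - φ₀ (gradient f x) + c * ‖gradient f x - gradient φ x‖ ^ 2 ≤
      φ x - f x := by
  have hstrong := hφ₀c.inner_gradient_add_sq_le_sub hφ₀d (gradient f x)
  rw [hinv, inner_sub_right, hφ.conjugate_gradient_eq hφd hφ₀] at hstrong
  rw [hf.conjugate_gradient_eq hfd hf₀]
  linarith

end Convex

section Integrable

variable {X Y : Type*} [MeasurableSpace X] [MeasurableSpace Y] {μ : Measure X}

theorem integrable_posPart_map_of_comp_le {T : X → Y} {g : Y → ℝ} {v : X → ℝ}
    (hT : AEMeasurable T μ) (hg : AEStronglyMeasurable g (μ.map T))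
    (hle : ∀ x, g (T x) ≤ v x) (hv : Integrable v μ) :
    Integrable (fun y => max (g y) 0) (μ.map T) := by
  have hgp : AEStronglyMeasurable (fun y => max (g y) 0) (μ.map T) :=
    hg.sup aestronglyMeasurable_const
  rw [integrable_map_measure hgp hT]
  exact integrable_of_le_of_le (hgp.comp_aemeasurable hT)
    (ae_of_all _ fun x => le_max_right _ _)
    (ae_of_all _ fun x => max_le_max_right 0 (hle x)) (integrable_zero _ _ _) hv.pos_part

theorem integrable_of_integrable_weighted_sum {ι : Type*} [Fintype ι] {f : ι → X → ℝ}
    {w : ι → ℝ} (hw : ∀ i, 0 < w i) (hf : ∀ i, AEStronglyMeasurable (f i) μ)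
    (hpos : ∀ i, Integrable (fun x => max (f i x) 0) μ)
    (hsum : Integrable (fun x => ∑ i, w i * f i x) μ) (i : ι) : Integrable (f i) μ := by
  have hlow : Integrable (fun x => (∑ j, w j * f j x - ∑ j, w j * max (f j x) 0) / w i) μ :=
    (hsum.sub (integrable_finsetSum _ fun j _ => (hpos j).const_mul (w j))).div_const _
  refine integrable_of_le_of_le (hf i) (ae_of_all _ fun x => ?_)
    (ae_of_all _ fun x => le_max_left (f i x) 0) hlow (hpos i)
  have hgap : w i * (max (f i x) 0 - f i x) ≤ ∑ j, w j * (max (f j x) 0 - f j x) :=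
    Finset.single_le_sum (f := fun j => w j * (max (f j x) 0 - f j x))
      (fun j _ => mul_nonneg (hw j).le (sub_nonneg.2 (le_max_left _ _))) (Finset.mem_univ i)
  simp only [mul_sub, Finset.sum_sub_distrib] at hgap
  rw [div_le_iff₀' (hw i)]
  linarith [mul_nonneg (hw i).le (le_max_right (f i x) 0)]

theorem integral_map_add_integral_le {T : X → Y} {g : Y → ℝ} {u v : X → ℝ}
    (hT : AEMeasurable T μ) (hg : Integrable g (μ.map T)) (hle : ∀ x, g (T x) + u x ≤ v x)
    (hu : Integrable u μ) (hv : Integrable v μ) :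
    ∫ y, g y ∂(μ.map T) + ∫ x, u x ∂μ ≤ ∫ x, v x ∂μ := by
  have hgT : Integrable (fun x => g (T x)) μ :=
    (integrable_map_measure hg.aestronglyMeasurable hT).1 hg
  rw [integral_map hT hg.aestronglyMeasurable, ← integral_add hgT hu]
  exact integral_mono (hgT.add hu) hv hle

theorem integral_weighted_sum_add_le {ι : Type*} [Fintype ι] {μ : ι → Measure X}
    {ν : Measure Y} [NeZero ν] {T : ι → X → Y} (hT : ∀ i, (μ i).map (T i) = ν) {w : ι → ℝ}
    (hw : ∀ i, 0 < w i) {g : ι → Y → ℝ} {u v : ι → X → ℝ}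
    (hg : ∀ i, AEStronglyMeasurable (g i) ν) (hle : ∀ i x, g i (T i x) + u i x ≤ v i x)
    (hu : ∀ i, Integrable (u i) (μ i)) (hv : ∀ i, Integrable (v i) (μ i))
    (hsum : Integrable (fun y => ∑ i, w i * g i y) ν) :
    ∫ y, ∑ i, w i * g i y ∂ν + ∑ i, w i * ∫ x, u i x ∂(μ i) ≤ ∑ i, w i * ∫ x, v i x ∂(μ i) := by
  have hTm i : AEMeasurable (T i) (μ i) :=
    aemeasurable_of_map_neZero (by rw [hT i]; infer_instance)
  have hgi : ∀ i, Integrable (g i) ν := by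
    refine integrable_of_integrable_weighted_sum hw hg (fun i => ?_) hsum
    rw [← hT i] at hg ⊢
    exact integrable_posPart_map_of_comp_le (hTm i) (hg i)
      (fun x => le_sub_iff_add_le.2 (hle i x)) ((hv i).sub (hu i))
  rw [integral_finsetSum _ fun i _ => (hgi i).const_mul (w i), ← Finset.sum_add_distrib]
  refine Finset.sum_le_sum fun i _ => ?_
  rw [integral_const_mul, ← mul_add]
  refine mul_le_mul_of_nonneg_left ?_ (hw i).le
  rw [← hT i] at hgi ⊢
  exact integral_map_add_integral_le (hTm i) (hgi i) (hle i) (hu i) (hv i)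

end Integrable

theorem le_mul_div_of_one_div_mul_sum_le {ι : Type*} [Fintype ι] {w a : ι → ℝ} {K Δ : ℝ}
    (hK : 0 < K) (hw : ∀ i, 0 < w i) (ha : ∀ i, 0 ≤ a i) (h : 1 / K * ∑ i, w i * a i ≤ Δ)
    (i : ι) : a i ≤ K * Δ / w i := by
  rw [one_div, inv_mul_le_iff₀ hK] at h
  have := Finset.single_le_sum (f := fun j => w j * a j)
    (fun j _ => mul_nonneg (hw j).le (ha j)) (Finset.mem_univ i)
  rw [le_div_iff₀ (hw i)]
  linarith [mul_comm (w i) (a i)]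

theorem barycenter_nonpositive_mismatch_corollary_general {D N : ℕ}
    (P : Fin N → Measure (EuclideanSpace ℝ (Fin D)))
    (Pbar : Measure (EuclideanSpace ℝ (Fin D)))
    [IsProbabilityMeasure Pbar]
    (α : Fin N → ℝ) (hα : ∀ n, 0 < α n)
    -- optimal congruent potentials ψₙ* with conjugates ψ̄ₙ*
    (ψs ψbs : Fin N → EuclideanSpace ℝ (Fin D) → ℝ)
    (hψs_conv : ∀ n, ConvexOn ℝ Set.univ (ψs n))
    (hψs_diff : ∀ n, Differentiable ℝ (ψs n))
    (hψbs_diff : ∀ n, Differentiable ℝ (ψbs n))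
    (hψbs_conj : ∀ n y, IsLUB (Set.range fun x => ⟪x, y⟫ - ψs n x) (ψbs n y))
    (hpush : ∀ n, (P n).map (gradient (ψs n)) = Pbar)
    (hcong : ∀ y, ∑ n, α n * ψbs n y = ‖y‖ ^ 2 / 2)
    -- candidate potentials ψₙ with conjugates ψ̄ₙ
    (B : ℝ) (hB : 0 < B)
    (ψ ψb : Fin N → EuclideanSpace ℝ (Fin D) → ℝ)
    (hψ_conv : ∀ n, ConvexOn ℝ Set.univ (ψ n))
    (hψ_diff : ∀ n, Differentiable ℝ (ψ n))
    (hψb_diff : ∀ n, Differentiable ℝ (ψb n))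
    (hψb_conj : ∀ n y, IsLUB (Set.range fun x => ⟪x, y⟫ - ψ n x) (ψb n y))
    (hψb_sconv : ∀ n, ConvexOn ℝ Set.univ (fun y => ψb n y - (1 / B) / 2 * ‖y‖ ^ 2))
    (hψb_inv : ∀ n x, gradient (ψb n) (gradient (ψ n) x) = x)
    -- integrability of the stated integrals
    (hint1 : ∀ n, Integrable (ψ n) (P n))
    (hint2 : ∀ n, Integrable (ψs n) (P n))
    (hint3 : Integrable (fun y => ∑ n, α n * ψb n y - ‖y‖ ^ 2 / 2) Pbar)
    (hint4 : ∀ n, Integrable (fun x => ‖gradient (ψs n) x - gradient (ψ n) x‖ ^ 2) (P n))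
    -- the difference of multiple correlations
    (Δ : ℝ)
    (hΔ : Δ = (∑ n, α n * ∫ x, ψ n x ∂(P n)) - ∑ n, α n * ∫ x, ψs n x ∂(P n))
    -- non-positive congruence mismatch
    (hmismatch : ∫ y, (∑ n, α n * ψb n y - ‖y‖ ^ 2 / 2) ∂Pbar ≤ 0) :
    Δ ≥ (1 / (2 * B)) * ∑ n, α n * ∫ x, ‖gradient (ψs n) x - gradient (ψ n) x‖ ^ 2 ∂(P n) ∧
    ∀ n, ∫ x, ‖gradient (ψs n) x - gradient (ψ n) x‖ ^ 2 ∂(P n) ≤ 2 * B * Δ / α n := by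
  have key n x : ψbs n (gradient (ψs n) x) - ψb n (gradient (ψs n) x)
      + 1 / B / 2 * ‖gradient (ψs n) x - gradient (ψ n) x‖ ^ 2 ≤ ψ n x - ψs n x :=
    conjugate_sub_conjugate_gradient_add_sq_le x (hψs_conv n) (hψs_diff n x) (hψbs_conj n)
      (hψ_conv n) (hψ_diff n x) (hψb_conj n) (hψb_sconv n) (hψb_diff n _) (hψb_inv n x)
  have hgap y : ∑ n, α n * (ψbs n y - ψb n y) = -(∑ n, α n * ψb n y - ‖y‖ ^ 2 / 2) := by
    simp only [mul_sub, Finset.sum_sub_distrib, hcong]; ring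
  have hmain := integral_weighted_sum_add_le hpush hα (g := fun n y => ψbs n y - ψb n y)
    (fun n => ((hψbs_diff n).continuous.sub (hψb_diff n).continuous).aestronglyMeasurable) key
    (fun n => (hint4 n).const_mul _) (fun n => (hint1 n).sub (hint2 n))
    (by simp_rw [hgap]; exact hint3.neg)
  simp only [hgap, integral_neg] at hmain
  simp only [integral_const_mul, integral_sub (hint1 _) (hint2 _), mul_sub,
    Finset.sum_sub_distrib, mul_left_comm (α _) (1 / B / 2), ← Finset.mul_sum, ← hΔ] at hmain
  have hS : 1 / (2 * B) * ∑ n, α n * ∫ x, ‖gradient (ψs n) x - gradient (ψ n) x‖ ^ 2 ∂(P n)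
      ≤ Δ := by
    rw [show 1 / (2 * B) = 1 / B / 2 by ring]; linarith
  exact ⟨hS, le_mul_div_of_one_div_mul_sum_le (by positivity) hα
    (fun n => integral_nonneg fun _ => sq_nonneg _) hS⟩

/-- Corollary to Theorem 1 (non-positive congruence mismatch). Under the
hypotheses of Theorem 1, if the congruence mismatch
`∫ (Σₙ αₙ ψ̄ₙ(y) − ‖y‖²/2) dP̄` is non-positive, then
`Δ ≥ (1/(2B)) Σₙ αₙ ∫ ‖∇ψₙ* − ∇ψₙ‖² dPₙ` and, for every `n`,
`∫ ‖∇ψₙ* − ∇ψₙ‖² dPₙ ≤ 2BΔ/αₙ`. -/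
theorem barycenter_nonpositive_mismatch_corollary {D N : ℕ}
    (P : Fin N → Measure (EuclideanSpace ℝ (Fin D)))
    (Pbar : Measure (EuclideanSpace ℝ (Fin D)))
    [∀ n, IsProbabilityMeasure (P n)] [IsProbabilityMeasure Pbar]
    (α : Fin N → ℝ) (hα : ∀ n, 0 < α n) (hαsum : ∑ n, α n = 1)
    -- optimal congruent potentials ψₙ* with conjugates ψ̄ₙ*
    (ψs ψbs : Fin N → EuclideanSpace ℝ (Fin D) → ℝ)
    (hψs_conv : ∀ n, ConvexOn ℝ Set.univ (ψs n))
    (hψs_diff : ∀ n, Differentiable ℝ (ψs n))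
    (hψbs_diff : ∀ n, Differentiable ℝ (ψbs n))
    (hψbs_conj : ∀ n y, IsLUB (Set.range fun x => ⟪x, y⟫ - ψs n x) (ψbs n y))
    (hpush : ∀ n, (P n).map (gradient (ψs n)) = Pbar)
    (hsinv : ∀ n x, gradient (ψbs n) (gradient (ψs n) x) = x)
    (hcong : ∀ y, ∑ n, α n * ψbs n y = ‖y‖ ^ 2 / 2)
    (hcongGrad : ∀ y, ∑ n, α n • gradient (ψbs n) y = y)
    -- candidate potentials ψₙ with conjugates ψ̄ₙ
    (B : ℝ) (hB : 0 < B)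
    (ψ ψb : Fin N → EuclideanSpace ℝ (Fin D) → ℝ)
    (hψ_conv : ∀ n, ConvexOn ℝ Set.univ (ψ n))
    (hψ_diff : ∀ n, Differentiable ℝ (ψ n))
    (hψ_smooth : ∀ n x y, ‖gradient (ψ n) x - gradient (ψ n) y‖ ≤ B * ‖x - y‖)
    (hψb_diff : ∀ n, Differentiable ℝ (ψb n))
    (hψb_conj : ∀ n y, IsLUB (Set.range fun x => ⟪x, y⟫ - ψ n x) (ψb n y))
    (hψb_sconv : ∀ n, ConvexOn ℝ Set.univ (fun y => ψb n y - (1 / B) / 2 * ‖y‖ ^ 2))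
    (hψb_inv : ∀ n x, gradient (ψb n) (gradient (ψ n) x) = x)
    -- integrability of the stated integrals
    (hint1 : ∀ n, Integrable (ψ n) (P n))
    (hint2 : ∀ n, Integrable (ψs n) (P n))
    (hint3 : Integrable (fun y => ∑ n, α n * ψb n y - ‖y‖ ^ 2 / 2) Pbar)
    (hint4 : ∀ n, Integrable (fun x => ‖gradient (ψs n) x - gradient (ψ n) x‖ ^ 2) (P n))
    -- the difference of multiple correlations
    (Δ : ℝ)
    (hΔ : Δ = (∑ n, α n * ∫ x, ψ n x ∂(P n)) - ∑ n, α n * ∫ x, ψs n x ∂(P n))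
    -- non-positive congruence mismatch
    (hmismatch : ∫ y, (∑ n, α n * ψb n y - ‖y‖ ^ 2 / 2) ∂Pbar ≤ 0) :
    Δ ≥ (1 / (2 * B)) * ∑ n, α n * ∫ x, ‖gradient (ψs n) x - gradient (ψ n) x‖ ^ 2 ∂(P n) ∧
    ∀ n, ∫ x, ‖gradient (ψs n) x - gradient (ψ n) x‖ ^ 2 ∂(P n) ≤ 2 * B * Δ / α n :=
  barycenter_nonpositive_mismatch_corollary_general P Pbar α hα ψs ψbs hψs_conv hψs_diff hψbs_diff
    hψbs_conj hpush hcong B hB ψ ψb hψ_conv hψ_diff hψb_diff hψb_conj hψb_sconv hψb_inv hint1 hint2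
    hint3 hint4 Δ hΔ hmismatch
end

section
/- Theorem 2, part 2 (L² error bound, the quantity that upper-bounds W₂²(∇ψₙ†♯Pₙ, P̄) in inequality (11)). Under the hypotheses of Theorem 2, part 1 (optimal congruent potentials {ψₙ*}; ψₙ† differentiable convex; ψ̄ₙ‡ β-strongly convex and B-smooth with 0 < β ≤ B < ∞, differentiable conjugates ψₙ‡ with mutually inverse gradients; λ > B/(2β²); τ ≥ 1 and P̄ ≤ τ·P̂ setwise; M the regularized objective), set Δ = M − Σₙ αₙ ∫ ψₙ* dPₙ. Then for every n ∈ {1,…,N}: ∫ ‖∇ψₙ†(x) − ∇ψₙ*(x)‖² dPₙ(x) ≤ (2Δ/αₙ) · (√(1/β) + √(1/(λβ² − B/2)))². -/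
/-!
Write `T = ∇ψₙ*`, `G = ∇ψₙ†` and `u = ∇ψₙ‡`, and let `κ = λβ² − β/2`. Pointwise, the
Fenchel–Young inequality for the `β`-strongly convex `ψ̄ₙ‡` (at `T x` from below, at `G x` from
above) and the `(1/β)`-Lipschitz bound `β‖G − u‖ ≤ ‖∇ψ̄ₙ‡(G x) − x‖` give
  `κ‖G − u‖² + (β/2)‖T − u‖² + (ψ̄ₙ* − ψ̄ₙ‡)(T x)`
    `≤ ⟨x, G x⟩ − ψ̄ₙ‡(G x) − ψₙ*(x) + λ‖∇ψ̄ₙ‡(G x) − x‖²`.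
Integrating against `Pₙ` moves the term `(ψ̄ₙ* − ψ̄ₙ‡) ∘ T` to an integral against `P̄ = T♯Pₙ`.
After weighting by `αₙ` and summing, congruence turns these into `∫ (‖y‖²/2 − Σ αₙ ψ̄ₙ‡) dP̄`, which
is at least `−τ ∫ [Σ αₙ ψ̄ₙ‡ − ‖·‖²/2]₊ dP̂` because `P̄ ≤ τ P̂`. So the quadratic terms integrate
to at most `Δ/αₙ`, and `‖G − T‖² ≤ (1/κ + 2/β)(κ‖G − u‖² + (β/2)‖T − u‖²)` finishes the bound.
-/

open MeasureTheory RealInnerProductSpace Set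

theorem ConvexOn.add_le_of_hasFDerivAt {E : Type*} [NormedAddCommGroup E] [NormedSpace ℝ E]
    {f : E → ℝ} {f' : E →L[ℝ] ℝ} {x : E} (hf : ConvexOn ℝ univ f) (hx : HasFDerivAt f f' x)
    (y : E) : f x + f' (y - x) ≤ f y := by
  have hline : ConvexOn ℝ univ (f ∘ AffineMap.lineMap (k := ℝ) x y) := by
    simpa using hf.comp_affineMap (AffineMap.lineMap x y)
  have hderiv : HasDerivAt (f ∘ AffineMap.lineMap (k := ℝ) x y) (f' (y - x)) 0 := by
    simpa using hx.comp_hasDerivAt_of_eq (0 : ℝ) AffineMap.hasDerivAt_lineMap (by simp)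
  have := hline.le_slope_of_hasDerivAt (mem_univ 0) (mem_univ 1) zero_lt_one hderiv
  simp only [map_sub, slope_def_field, Function.comp_apply, AffineMap.lineMap_apply_one,
    AffineMap.lineMap_apply_zero, sub_zero, div_one, tsub_le_iff_right] at this
  rw [map_sub]
  linarith

section InnerProduct

variable {F : Type*} [NormedAddCommGroup F] [InnerProductSpace ℝ F]

theorem fenchel_eq_of_subgradient {f : F → ℝ} {x g : F} {c : ℝ}
    (hconj : IsLUB (range fun y => ⟪y, g⟫ - f y) c) (hsub : ∀ y, f x + ⟪g, y - x⟫ ≤ f y) :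
    c = ⟪x, g⟫ - f x := by
  refine hconj.unique (IsGreatest.isLUB ⟨⟨x, rfl⟩, ?_⟩)
  rintro _ ⟨y, rfl⟩
  have := hsub y
  rw [inner_sub_right, real_inner_comm y g, real_inner_comm x g] at this
  show ⟪y, g⟫ - f y ≤ ⟪x, g⟫ - f x
  linarith

variable [CompleteSpace F]

theorem StrongConvexOn.add_le_of_hasGradientAt {b : F → ℝ} {β : ℝ} {g z : F}
    (hb : StrongConvexOn univ β b) (hz : HasGradientAt b g z) (y : F) :
    b z + ⟪g, y - z⟫ + β / 2 * ‖y - z‖ ^ 2 ≤ b y := by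
  have hφ := (strongConvexOn_iff_convex.1 hb).add_le_of_hasFDerivAt
    (hz.hasFDerivAt.sub ((hasStrictFDerivAt_norm_sq z).hasFDerivAt.const_mul (β / 2))) y
  simp only [sub_apply, smul_apply, InnerProductSpace.toDual_apply_apply, innerSL_apply_apply,
    nsmul_eq_mul, smul_eq_mul, Nat.cast_ofNat, inner_sub_right, real_inner_self_eq_norm_sq] at hφ
  rw [norm_sub_sq_real, inner_sub_right, real_inner_comm z y]
  linarith

theorem ConvexOn.fenchel_gradient_eq {f fc : F → ℝ} (hf : ConvexOn ℝ univ f)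
    (hdiff : Differentiable ℝ f) (hconj : ∀ y, IsLUB (range fun x => ⟪x, y⟫ - f x) (fc y))
    (x : F) : fc (gradient f x) = ⟪x, gradient f x⟫ - f x :=
  fenchel_eq_of_subgradient (hconj _) (hf.add_le_of_hasFDerivAt (hdiff x).hasGradientAt.hasFDerivAt)

theorem StrongConvexOn.fenchel_le {b : F → ℝ} {β c : ℝ} {g p x : F} (hb : StrongConvexOn univ β b)
    (hβ : 0 < β) (hp : HasGradientAt b g p) (hconj : IsLUB (range fun y => ⟪y, x⟫ - b y) c) :
    c ≤ ⟪p, x⟫ - b p + 1 / (2 * β) * ‖g - x‖ ^ 2 := by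
  refine hconj.2 ?_
  rintro _ ⟨y, rfl⟩
  have hbreg := hb.add_le_of_hasGradientAt hp y
  have hyoung : ⟪y - p, x - g⟫ ≤ β / 2 * ‖y - p‖ ^ 2 + 1 / (2 * β) * ‖g - x‖ ^ 2 := by
    have h := sq_nonneg ‖β • (y - p) - (x - g)‖
    rw [norm_sub_sq_real, norm_smul, real_inner_smul_left, Real.norm_of_nonneg hβ.le,
      norm_sub_rev x g] at h
    have e : β / 2 * ‖y - p‖ ^ 2 + 1 / (2 * β) * ‖g - x‖ ^ 2 - ⟪y - p, x - g⟫
        = ((β * ‖y - p‖) ^ 2 - 2 * (β * ⟪y - p, x - g⟫) + ‖g - x‖ ^ 2) / (2 * β) := by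
      field_simp
      ring
    linarith [div_nonneg h (by positivity : (0 : ℝ) ≤ 2 * β)]
  simp only [inner_sub_left, inner_sub_right, real_inner_comm] at hbreg hyoung ⊢
  linarith

theorem StrongConvexOn.sq_norm_sub_le_fenchel {b : F → ℝ} {β c : ℝ} {x z : F}
    (hb : StrongConvexOn univ β b) (hβ : 0 ≤ β) (hz : HasGradientAt b x z)
    (hconj : IsLUB (range fun y => ⟪y, x⟫ - b y) c) (w : F) :
    β / 2 * ‖w - z‖ ^ 2 ≤ c - ⟪w, x⟫ + b w := by
  have hc : c = ⟪z, x⟫ - b z := fenchel_eq_of_subgradient hconj fun y => by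
    have : 0 ≤ β / 2 * ‖y - z‖ ^ 2 := by positivity
    linarith [hb.add_le_of_hasGradientAt hz y]
  have hbreg := hb.add_le_of_hasGradientAt hz w
  rw [hc, real_inner_comm x w, real_inner_comm x z]
  rw [inner_sub_right] at hbreg
  linarith

theorem gap_le_objective_integrand {ψ ψc b d : F → ℝ} {β lam : ℝ} (hβ : 0 < β)
    (hlam : 1 / (2 * β) ≤ lam) (hψ : ConvexOn ℝ univ ψ) (hψ_diff : Differentiable ℝ ψ)
    (hψc : ∀ y, IsLUB (range fun x => ⟪x, y⟫ - ψ x) (ψc y))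
    (hb : StrongConvexOn univ β b) (hb_diff : Differentiable ℝ b)
    (hd : ∀ x, IsLUB (range fun y => ⟪y, x⟫ - b y) (d x))
    (hd_lip : ∀ x y, ‖gradient d x - gradient d y‖ ≤ 1 / β * ‖x - y‖)
    (hbd : ∀ x, gradient b (gradient d x) = x) (hdb : ∀ y, gradient d (gradient b y) = y)
    (x g : F) :
    (lam * β ^ 2 - β / 2) * ‖g - gradient d x‖ ^ 2
        + β / 2 * ‖gradient ψ x - gradient d x‖ ^ 2
        + (ψc (gradient ψ x) - b (gradient ψ x))
      ≤ ⟪x, g⟫ - b g - ψ x + lam * ‖gradient b g - x‖ ^ 2 := by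
  have hψx := hψ.fenchel_gradient_eq hψ_diff hψc x
  have hlower := hb.sq_norm_sub_le_fenchel hβ.le
    (by simpa [hbd x] using (hb_diff (gradient d x)).hasGradientAt) (hd x) (gradient ψ x)
  have hupper := hb.fenchel_le hβ (hb_diff g).hasGradientAt (hd x)
  have hlip : β * ‖g - gradient d x‖ ≤ ‖gradient b g - x‖ := by
    have := hd_lip (gradient b g) x
    rw [hdb g] at this
    rwa [one_div_mul_eq_div, le_div_iff₀ hβ, mul_comm] at this
  have hsq : β ^ 2 * ‖g - gradient d x‖ ^ 2 ≤ ‖gradient b g - x‖ ^ 2 := by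
    rw [← mul_pow]
    exact pow_le_pow_left₀ (by positivity) hlip 2
  have hweighted := mul_le_mul_of_nonneg_left hsq (sub_nonneg.2 hlam)
  have e : (lam - 1 / (2 * β)) * β ^ 2 = lam * β ^ 2 - β / 2 := by field_simp
  rw [← mul_assoc, e] at hweighted
  rw [real_inner_comm x g] at hupper
  rw [real_inner_comm x (gradient ψ x)] at hlower
  rw [hψx]
  linarith

end InnerProduct

theorem add_sq_le_mul_add {a b : ℝ} (ha : 0 < a) (hb : 0 < b) (s t : ℝ) :
    (s + t) ^ 2 ≤ (1 / a + 1 / b) * (a * s ^ 2 + b * t ^ 2) := by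
  have e : (1 / a + 1 / b) * (a * s ^ 2 + b * t ^ 2) - (s + t) ^ 2
      = (a * s - b * t) ^ 2 / (a * b) := by
    field_simp
    ring
  linarith [div_nonneg (sq_nonneg (a * s - b * t)) (mul_pos ha hb).le]

theorem norm_sub_sq_le_mul_add {E : Type*} [SeminormedAddCommGroup E] {a b : ℝ} (ha : 0 < a)
    (hb : 0 < b) (v w u : E) :
    ‖v - w‖ ^ 2 ≤ (1 / a + 1 / b) * (a * ‖v - u‖ ^ 2 + b * ‖w - u‖ ^ 2) := by
  have htri : ‖v - w‖ ≤ ‖v - u‖ + ‖w - u‖ := by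
    simpa [norm_sub_rev u w] using norm_sub_le_norm_sub_add_norm_sub v u w
  exact (pow_le_pow_left₀ (norm_nonneg _) htri 2).trans (add_sq_le_mul_add ha hb _ _)

theorem add_le_sq_sqrt_add_sqrt {a b : ℝ} (ha : 0 ≤ a) (hb : 0 ≤ b) :
    a + b ≤ (√a + √b) ^ 2 := by
  rw [add_sq, Real.sq_sqrt ha, Real.sq_sqrt hb]
  nlinarith [Real.sqrt_nonneg a, Real.sqrt_nonneg b]

@[fun_prop]
theorem measurable_gradient_s5 {F : Type*} [NormedAddCommGroup F] [InnerProductSpace ℝ F]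
    [CompleteSpace F] [MeasurableSpace F] [BorelSpace F] (f : F → ℝ) :
    Measurable (gradient f) :=
  (InnerProductSpace.toDual ℝ F).symm.continuous.measurable.comp (measurable_fderiv ℝ f)

section Integration

variable {X Y : Type*} [MeasurableSpace X] [MeasurableSpace Y]

theorem integrable_of_sum_ge {ι : Type*} [Fintype ι] {ν : Measure Y} {α : ι → ℝ}
    {h : ι → Y → ℝ} {s : Y → ℝ} (hα : ∀ k, 0 < α k) (hh : ∀ k, AEStronglyMeasurable (h k) ν)
    (hpos : ∀ k, Integrable (fun y => max (h k y) 0) ν) (hs : Integrable s ν)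
    (hsum : ∀ y, -s y ≤ ∑ k, α k * h k y) (n : ι) : Integrable (h n) ν := by
  classical
  refine integrable_of_le_of_le (g₁ := fun y => -(s y + ∑ k, α k * max (h k y) 0) / α n)
    (hh n) (ae_of_all _ fun y => ?_) (ae_of_all _ fun y => le_max_left (h n y) 0)
    ((hs.add (integrable_finsetSum _ fun k _ => (hpos k).const_mul (α k))).neg.div_const (α n))
    (hpos n)
  have hsplit := Finset.add_sum_erase Finset.univ (fun k => α k * h k y) (Finset.mem_univ n)
  have hrest : ∑ k ∈ Finset.univ.erase n, α k * h k y ≤ ∑ k, α k * max (h k y) 0 :=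
    (Finset.sum_le_sum fun k _ => mul_le_mul_of_nonneg_left (le_max_left _ _) (hα k).le).trans
      (Finset.sum_le_sum_of_subset_of_nonneg (Finset.erase_subset _ _)
        fun k _ _ => mul_nonneg (hα k).le (le_max_right _ _))
  rw [div_le_iff₀ (hα n)]
  linarith [hsum y]

theorem integral_add_integral_map_le {μ : Measure X} {T : X → Y} (hT : AEMeasurable T μ)
    {q g : X → ℝ} {h : Y → ℝ} (hq : Integrable q μ) (hg : Integrable g μ)
    (hh : Integrable h (μ.map T)) (hle : ∀ x, q x + h (T x) ≤ g x) :
    ∫ x, q x ∂μ + ∫ y, h y ∂(μ.map T) ≤ ∫ x, g x ∂μ := by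
  have hhT : Integrable (fun x => h (T x)) μ := hh.comp_aemeasurable hT
  rw [integral_map hT hh.aestronglyMeasurable, ← integral_add hq hhT]
  exact integral_mono (hq.add hhT) hg hle

theorem integral_le_mul_integral_of_le_smul {ν μ : Measure X} {c : ℝ} (hc : 0 ≤ c)
    (hνμ : ν ≤ ENNReal.ofReal c • μ) {f : X → ℝ} (hf0 : ∀ x, 0 ≤ f x) (hf : Integrable f μ) :
    ∫ x, f x ∂ν ≤ c * ∫ x, f x ∂μ := by
  calc ∫ x, f x ∂ν ≤ ∫ x, f x ∂(ENNReal.ofReal c • μ) :=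
        integral_mono_measure hνμ (ae_of_all _ hf0) (hf.smul_measure ENNReal.ofReal_ne_top)
    _ = c * ∫ x, f x ∂μ := by rw [integral_smul_measure, ENNReal.toReal_ofReal hc, smul_eq_mul]

theorem integral_norm_sub_sq_le {E : Type*} [NormedAddCommGroup E] {μ : Measure X}
    {f g u : X → E} {a b K : ℝ} (ha : 0 < a) (hb : 0 < b)
    (hint : Integrable (fun x => a * ‖f x - u x‖ ^ 2 + b * ‖g x - u x‖ ^ 2) μ)
    (hK : ∫ x, (a * ‖f x - u x‖ ^ 2 + b * ‖g x - u x‖ ^ 2) ∂μ ≤ K) :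
    ∫ x, ‖f x - g x‖ ^ 2 ∂μ ≤ (1 / a + 1 / b) * K := by
  refine le_trans ?_ (mul_le_mul_of_nonneg_left hK (by positivity))
  rw [← integral_const_mul]
  exact integral_mono_of_nonneg (ae_of_all _ fun x => by positivity) (hint.const_mul _)
    (ae_of_all _ fun x => norm_sub_sq_le_mul_add ha hb _ _ _)

theorem sum_integral_le_of_gap {ι : Type*} [Fintype ι] {μ : ι → Measure X} {ν : Measure Y}
    {T : ι → X → Y} {q g : ι → X → ℝ} {h : ι → Y → ℝ} {α : ι → ℝ} {s : Y → ℝ}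
    (hT : ∀ n, Measurable (T n)) (hpush : ∀ n, (μ n).map (T n) = ν)
    (hq : ∀ n, AEStronglyMeasurable (q n) (μ n)) (hq0 : ∀ n x, 0 ≤ q n x)
    (hg : ∀ n, Integrable (g n) (μ n)) (hh : ∀ n, AEStronglyMeasurable (h n) ν)
    (hgap : ∀ n x, q n x + h n (T n x) ≤ g n x) (hα : ∀ n, 0 < α n) (hs : Integrable s ν)
    (hsum : ∀ y, -s y ≤ ∑ n, α n * h n y) :
    (∀ n, Integrable (q n) (μ n)) ∧
      ∑ n, α n * ∫ x, q n x ∂(μ n) ≤ ∑ n, α n * ∫ x, g n x ∂(μ n) + ∫ y, s y ∂ν := by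
  have hpos : ∀ n, Integrable (fun y => max (h n y) 0) ν := fun n => by
    have hmax : AEStronglyMeasurable (fun y => max (h n y) 0) ((μ n).map (T n)) :=
      hpush n ▸ (hh n).sup aestronglyMeasurable_const
    rw [← hpush n, integrable_map_measure hmax (hT n).aemeasurable]
    refine (hg n).pos_part.mono' (hmax.comp_aemeasurable (hT n).aemeasurable)
      (ae_of_all _ fun x => ?_)
    rw [Function.comp_apply, Real.norm_of_nonneg (le_max_right _ _)]
    exact max_le_max (by linarith [hgap n x, hq0 n x]) le_rfl
  have hh_int := integrable_of_sum_ge hα hh hpos hs hsum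
  have hh_map : ∀ n, Integrable (h n) ((μ n).map (T n)) := fun n => hpush n ▸ hh_int n
  have hq_int : ∀ n, Integrable (q n) (μ n) := fun n =>
    integrable_of_le_of_le (g₁ := 0) (hq n) (ae_of_all _ (hq0 n))
      (ae_of_all _ fun x => le_sub_iff_add_le.2 (hgap n x)) (integrable_zero _ _ _)
      ((hg n).sub ((hh_map n).comp_aemeasurable (hT n).aemeasurable))
  refine ⟨hq_int, ?_⟩
  have hsingle : ∀ n, ∫ x, q n x ∂(μ n) ≤ ∫ x, g n x ∂(μ n) - ∫ y, h n y ∂ν := fun n => by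
    have := integral_add_integral_map_le (hT n).aemeasurable (hq_int n) (hg n) (hh_map n) (hgap n)
    rw [hpush n] at this
    linarith
  have hbary : -∫ y, s y ∂ν ≤ ∑ n, α n * ∫ y, h n y ∂ν := by
    simp_rw [← integral_const_mul]
    rw [← integral_finsetSum _ fun n _ => (hh_int n).const_mul _, ← integral_neg]
    exact integral_mono hs.neg (integrable_finsetSum _ fun n _ => (hh_int n).const_mul _) hsum
  calc ∑ n, α n * ∫ x, q n x ∂(μ n)
      ≤ ∑ n, α n * (∫ x, g n x ∂(μ n) - ∫ y, h n y ∂ν) :=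
        Finset.sum_le_sum fun n _ => mul_le_mul_of_nonneg_left (hsingle n) (hα n).le
    _ ≤ ∑ n, α n * ∫ x, g n x ∂(μ n) + ∫ y, s y ∂ν := by
        simp only [mul_sub, Finset.sum_sub_distrib]
        linarith

end Integration

theorem theorem2_L2_error_bound_general {D N : ℕ}
    (P : Fin N → Measure (EuclideanSpace ℝ (Fin D)))
    (Pbar : Measure (EuclideanSpace ℝ (Fin D)))
    (α : Fin N → ℝ) (hα : ∀ n, 0 < α n)
    -- optimal congruent potentials ψₙ* with conjugates ψ̄ₙ*
    (ψs ψbs : Fin N → EuclideanSpace ℝ (Fin D) → ℝ)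
    (hψs_conv : ∀ n, ConvexOn ℝ Set.univ (ψs n))
    (hψs_diff : ∀ n, Differentiable ℝ (ψs n))
    (hψbs_diff : ∀ n, Differentiable ℝ (ψbs n))
    (hψbs_conj : ∀ n y, IsLUB (Set.range fun x => ⟪x, y⟫ - ψs n x) (ψbs n y))
    (hpush : ∀ n, (P n).map (gradient (ψs n)) = Pbar)
    (hcong : ∀ y, ∑ n, α n * ψbs n y = ‖y‖ ^ 2 / 2)
    -- candidate potentials ψₙ† and ψ̄ₙ‡ with conjugates ψₙ‡
    (β B : ℝ) (hβ : 0 < β) (hβB : β ≤ B)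
    (ψdag ψbd ψd : Fin N → EuclideanSpace ℝ (Fin D) → ℝ)
    (hψbd_diff : ∀ n, Differentiable ℝ (ψbd n))
    (hψbd_sconv : ∀ n, ConvexOn ℝ Set.univ (fun y => ψbd n y - β / 2 * ‖y‖ ^ 2))
    (hψd_conj : ∀ n x, IsLUB (Set.range fun y => ⟪y, x⟫ - ψbd n y) (ψd n x))
    (hψd_lip : ∀ n x y, ‖gradient (ψd n) x - gradient (ψd n) y‖ ≤ (1 / β) * ‖x - y‖)
    (hinv1 : ∀ n x, gradient (ψbd n) (gradient (ψd n) x) = x)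
    (hinv2 : ∀ n y, gradient (ψd n) (gradient (ψbd n) y) = y)
    -- regularization parameters
    (lam : ℝ) (hlam : lam > B / (2 * β ^ 2))
    (τ : ℝ) (hτ : 1 ≤ τ)
    (Phat : Measure (EuclideanSpace ℝ (Fin D)))
    (hdom : ∀ A : Set (EuclideanSpace ℝ (Fin D)), MeasurableSet A →
      Pbar A ≤ ENNReal.ofReal τ * Phat A)
    -- integrability of the stated integrals
    (hintM1 : ∀ n, Integrable
      (fun x => ⟪x, gradient (ψdag n) x⟫ - ψbd n (gradient (ψdag n) x)) (P n))
    (hintM2 : Integrable (fun y => max (∑ n, α n * ψbd n y - ‖y‖ ^ 2 / 2) 0) Phat)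
    (hintM3 : ∀ n, Integrable
      (fun x => ‖gradient (ψbd n) (gradient (ψdag n) x) - x‖ ^ 2) (P n))
    (hint_s : ∀ n, Integrable (ψs n) (P n))
    -- the regularized objective
    (M : ℝ)
    (hM : M = (∑ n, α n * ∫ x, (⟪x, gradient (ψdag n) x⟫
          - ψbd n (gradient (ψdag n) x)) ∂(P n))
      + τ * ∫ y, max (∑ n, α n * ψbd n y - ‖y‖ ^ 2 / 2) 0 ∂Phat
      + lam * ∑ n, α n * ∫ x, ‖gradient (ψbd n) (gradient (ψdag n) x) - x‖ ^ 2 ∂(P n))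
    (Δ : ℝ) (hΔ : Δ = M - ∑ n, α n * ∫ x, ψs n x ∂(P n)) :
    ∀ n, ∫ x, ‖gradient (ψdag n) x - gradient (ψs n) x‖ ^ 2 ∂(P n) ≤
      (2 * Δ / α n) *
        (Real.sqrt (1 / β) + Real.sqrt (1 / (lam * β ^ 2 - B / 2))) ^ 2 := by
  intro m
  have hB : B / 2 < lam * β ^ 2 := by
    rw [gt_iff_lt, div_lt_iff₀ (by positivity)] at hlam
    linarith
  have hlam_half : 1 / (2 * β) ≤ lam := by
    rw [div_le_iff₀ (by positivity)]
    nlinarith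
  have hc : 0 < lam * β ^ 2 - B / 2 := by linarith
  have hcκ : lam * β ^ 2 - B / 2 ≤ lam * β ^ 2 - β / 2 := by linarith
  set κ := lam * β ^ 2 - β / 2
  set c := lam * β ^ 2 - B / 2
  set q := fun n x => κ * ‖gradient (ψdag n) x - gradient (ψd n) x‖ ^ 2
    + β / 2 * ‖gradient (ψs n) x - gradient (ψd n) x‖ ^ 2
  set g := fun n x => ⟪x, gradient (ψdag n) x⟫ - ψbd n (gradient (ψdag n) x) - ψs n x
    + lam * ‖gradient (ψbd n) (gradient (ψdag n) x) - x‖ ^ 2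
  have hq0 : ∀ n x, 0 ≤ q n x := fun n x =>
    add_nonneg (mul_nonneg (hc.le.trans hcκ) (sq_nonneg _)) (by positivity)
  have hdom' : Pbar ≤ ENNReal.ofReal τ • Phat := Measure.le_iff.2 hdom
  obtain ⟨hq_int, hq_sum⟩ := sum_integral_le_of_gap (q := q) (g := g)
    (h := fun n y => ψbs n y - ψbd n y) (fun n => measurable_gradient_s5 _) hpush
    (fun n => by fun_prop) hq0
    (fun n => ((hintM1 n).sub (hint_s n)).add ((hintM3 n).const_mul lam))
    (fun n => ((hψbs_diff n).continuous.sub (hψbd_diff n).continuous).aestronglyMeasurable)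
    (fun n x => gap_le_objective_integrand hβ hlam_half (hψs_conv n) (hψs_diff n) (hψbs_conj n)
      (strongConvexOn_iff_convex.2 (hψbd_sconv n)) (hψbd_diff n) (hψd_conj n) (hψd_lip n)
      (hinv1 n) (hinv2 n) x _)
    hα ((hintM2.smul_measure ENNReal.ofReal_ne_top).mono_measure hdom')
    (fun y => by
      simp only [mul_sub, Finset.sum_sub_distrib, hcong]
      linarith [le_max_left (∑ n, α n * ψbd n y - ‖y‖ ^ 2 / 2) 0])
  have hg_eq : ∀ n, ∫ x, g n x ∂(P n)
      = ∫ x, (⟪x, gradient (ψdag n) x⟫ - ψbd n (gradient (ψdag n) x)) ∂(P n)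
        - ∫ x, ψs n x ∂(P n)
        + lam * ∫ x, ‖gradient (ψbd n) (gradient (ψdag n) x) - x‖ ^ 2 ∂(P n) := fun n => by
    rw [integral_add (f := fun x => ⟪x, gradient (ψdag n) x⟫ - ψbd n (gradient (ψdag n) x) - ψs n x)
        ((hintM1 n).sub (hint_s n)) ((hintM3 n).const_mul lam),
      integral_sub (hintM1 n) (hint_s n), integral_const_mul]
  have hτ_term := integral_le_mul_integral_of_le_smul (by linarith) hdom'
    (fun y => le_max_right (∑ n, α n * ψbd n y - ‖y‖ ^ 2 / 2) 0) hintM2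
  have hΔ_ge : ∑ n, α n * ∫ x, q n x ∂(P n) ≤ Δ := by
    simp only [hg_eq, mul_add, mul_sub, Finset.sum_add_distrib, Finset.sum_sub_distrib] at hq_sum
    rw [hΔ, hM, Finset.mul_sum]
    simp only [mul_left_comm lam]
    linarith
  have hq_m : ∫ x, q m x ∂(P m) ≤ Δ / α m := (le_div_iff₀' (hα m)).2 <|
    (Finset.single_le_sum (fun n _ => mul_nonneg (hα n).le (integral_nonneg (hq0 n)))
      (Finset.mem_univ m)).trans hΔ_ge
  have hcoeff : 1 / κ + 1 / (β / 2) ≤ 2 * (√(1 / β) + √(1 / c)) ^ 2 := by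
    have := add_le_sq_sqrt_add_sqrt (one_div_pos.2 hβ).le (one_div_pos.2 hc).le
    have := one_div_le_one_div_of_le hc hcκ
    have : 0 < 1 / c := by positivity
    rw [one_div_div, div_eq_mul_one_div 2 β]
    linarith
  calc _ ≤ (1 / κ + 1 / (β / 2)) * (Δ / α m) :=
        integral_norm_sub_sq_le (hc.trans_le hcκ) (by positivity) (hq_int m) hq_m
    _ ≤ 2 * (√(1 / β) + √(1 / c)) ^ 2 * (Δ / α m) :=
        mul_le_mul_of_nonneg_right hcoeff ((integral_nonneg (hq0 m)).trans hq_m)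
    _ = _ := by ring

/-- Theorem 2, part 2 (L² error bound, inequality (11)): with
`Δ = M − Σₙ αₙ ∫ ψₙ* dPₙ`, for every `n`,
`∫ ‖∇ψₙ†(x) − ∇ψₙ*(x)‖² dPₙ(x) ≤ (2Δ/αₙ)(√(1/β) + √(1/(λβ² − B/2)))²`. -/
theorem theorem2_L2_error_bound {D N : ℕ}
    (P : Fin N → Measure (EuclideanSpace ℝ (Fin D)))
    (Pbar : Measure (EuclideanSpace ℝ (Fin D)))
    [∀ n, IsProbabilityMeasure (P n)] [IsProbabilityMeasure Pbar]
    (α : Fin N → ℝ) (hα : ∀ n, 0 < α n) (hαsum : ∑ n, α n = 1)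
    -- optimal congruent potentials ψₙ* with conjugates ψ̄ₙ*
    (ψs ψbs : Fin N → EuclideanSpace ℝ (Fin D) → ℝ)
    (hψs_conv : ∀ n, ConvexOn ℝ Set.univ (ψs n))
    (hψs_diff : ∀ n, Differentiable ℝ (ψs n))
    (hψbs_diff : ∀ n, Differentiable ℝ (ψbs n))
    (hψbs_conj : ∀ n y, IsLUB (Set.range fun x => ⟪x, y⟫ - ψs n x) (ψbs n y))
    (hpush : ∀ n, (P n).map (gradient (ψs n)) = Pbar)
    (hsinv : ∀ n x, gradient (ψbs n) (gradient (ψs n) x) = x)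
    (hcong : ∀ y, ∑ n, α n * ψbs n y = ‖y‖ ^ 2 / 2)
    (hcongGrad : ∀ y, ∑ n, α n • gradient (ψbs n) y = y)
    -- candidate potentials ψₙ† and ψ̄ₙ‡ with conjugates ψₙ‡
    (β B : ℝ) (hβ : 0 < β) (hβB : β ≤ B)
    (ψdag ψbd ψd : Fin N → EuclideanSpace ℝ (Fin D) → ℝ)
    (hψdag_conv : ∀ n, ConvexOn ℝ Set.univ (ψdag n))
    (hψdag_diff : ∀ n, Differentiable ℝ (ψdag n))
    (hψbd_conv : ∀ n, ConvexOn ℝ Set.univ (ψbd n))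
    (hψbd_diff : ∀ n, Differentiable ℝ (ψbd n))
    (hψbd_sconv : ∀ n, ConvexOn ℝ Set.univ (fun y => ψbd n y - β / 2 * ‖y‖ ^ 2))
    (hψbd_smooth : ∀ n x y, ‖gradient (ψbd n) x - gradient (ψbd n) y‖ ≤ B * ‖x - y‖)
    (hψd_diff : ∀ n, Differentiable ℝ (ψd n))
    (hψd_conj : ∀ n x, IsLUB (Set.range fun y => ⟪y, x⟫ - ψbd n y) (ψd n x))
    (hψd_lip : ∀ n x y, ‖gradient (ψd n) x - gradient (ψd n) y‖ ≤ (1 / β) * ‖x - y‖)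
    (hinv1 : ∀ n x, gradient (ψbd n) (gradient (ψd n) x) = x)
    (hinv2 : ∀ n y, gradient (ψd n) (gradient (ψbd n) y) = y)
    -- regularization parameters
    (lam : ℝ) (hlam : lam > B / (2 * β ^ 2))
    (τ : ℝ) (hτ : 1 ≤ τ)
    (Phat : Measure (EuclideanSpace ℝ (Fin D))) [IsProbabilityMeasure Phat]
    (hdom : ∀ A : Set (EuclideanSpace ℝ (Fin D)), MeasurableSet A →
      Pbar A ≤ ENNReal.ofReal τ * Phat A)
    -- integrability of the stated integrals
    (hintM1 : ∀ n, Integrable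
      (fun x => ⟪x, gradient (ψdag n) x⟫ - ψbd n (gradient (ψdag n) x)) (P n))
    (hintM2 : Integrable (fun y => max (∑ n, α n * ψbd n y - ‖y‖ ^ 2 / 2) 0) Phat)
    (hintM3 : ∀ n, Integrable
      (fun x => ‖gradient (ψbd n) (gradient (ψdag n) x) - x‖ ^ 2) (P n))
    (hint_s : ∀ n, Integrable (ψs n) (P n))
    -- the regularized objective
    (M : ℝ)
    (hM : M = (∑ n, α n * ∫ x, (⟪x, gradient (ψdag n) x⟫
          - ψbd n (gradient (ψdag n) x)) ∂(P n))
      + τ * ∫ y, max (∑ n, α n * ψbd n y - ‖y‖ ^ 2 / 2) 0 ∂Phat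
      + lam * ∑ n, α n * ∫ x, ‖gradient (ψbd n) (gradient (ψdag n) x) - x‖ ^ 2 ∂(P n))
    (hint_dev : ∀ n, Integrable
      (fun x => ‖gradient (ψdag n) x - gradient (ψs n) x‖ ^ 2) (P n))
    (Δ : ℝ) (hΔ : Δ = M - ∑ n, α n * ∫ x, ψs n x ∂(P n)) :
    ∀ n, ∫ x, ‖gradient (ψdag n) x - gradient (ψs n) x‖ ^ 2 ∂(P n) ≤
      (2 * Δ / α n) *
        (Real.sqrt (1 / β) + Real.sqrt (1 / (lam * β ^ 2 - B / 2))) ^ 2 :=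
  theorem2_L2_error_bound_general P Pbar α hα ψs ψbs hψs_conv hψs_diff hψbs_diff hψbs_conj hpush
    hcong β B hβ hβB ψdag ψbd ψd hψbd_diff hψbd_sconv hψd_conj hψd_lip hinv1 hinv2 lam hlam τ hτ
    Phat hdom hintM1 hintM2 hintM3 hint_s M hM Δ hΔ
end

section
/- Combined pointwise bound (inequality (21) of the paper). Let ψ̄‡ : ℝ^D → ℝ be differentiable convex, β-strongly convex and B-smooth (0 < β ≤ B < ∞), and let ψ‡ be its differentiable convex conjugate with ∇ψ‡ being (1/β)-Lipschitz, ∇ψ̄‡(∇ψ‡(x)) = x and ∇ψ‡(∇ψ̄‡(y)) = y for all x, y ∈ ℝ^D. Let ψ† : ℝ^D → ℝ be differentiable. Then for every x ∈ ℝ^D: ⟨x, ∇ψ†(x)⟩ − ψ̄‡(∇ψ†(x)) ≥ (⟨x, ∇ψ‡(x)⟩ − ψ̄‡(∇ψ‡(x))) − (B/(2β²)) · ‖x − ∇ψ̄‡(∇ψ†(x))‖². -/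
/-!
The first-order form of `β`-strong convexity at `u = ∇ψdag x`, tested at `v = ∇ψd x`, bounds the
gap `(⟪x, v⟫ - ψbd v) - (⟪x, u⟫ - ψbd u)` by `⟪x - ∇ψbd u, v - u⟫ - β/2 ‖v - u‖²`, and Young's
inequality bounds this by `‖x - ∇ψbd u‖² / (2β) ≤ B/(2β²) ‖x - ∇ψbd u‖²`.
-/

open RealInnerProductSpace

theorem ConvexOn.add_fderiv_sub_le {E : Type*} [NormedAddCommGroup E] [NormedSpace ℝ E]
    {f : E → ℝ} {f' : E →L[ℝ] ℝ} {b : E} (hf : ConvexOn ℝ Set.univ f) (hd : HasFDerivAt f f' b)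
    (a : E) : f b + f' (a - b) ≤ f a := by
  set ℓ : ℝ →ᵃ[ℝ] E := AffineMap.lineMap b a
  have hline : ConvexOn ℝ Set.univ (f ∘ ℓ) := by
    simpa using hf.comp_affineMap ℓ
  have hderiv : HasDerivAt (f ∘ ℓ) (f' (a - b)) 0 := by
    have hl : HasDerivAt ℓ (a - b) 0 := AffineMap.hasDerivAt_lineMap
    exact (by simpa [ℓ] using hd : HasFDerivAt f f' (ℓ 0)).comp_hasDerivAt 0 hl
  have hslope := hline.le_slope_of_hasDerivAt (Set.mem_univ 0) (Set.mem_univ 1) zero_lt_one hderiv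
  simp only [slope_def_field, Function.comp_apply, ℓ, AffineMap.lineMap_apply_zero,
    AffineMap.lineMap_apply_one, sub_zero, div_one] at hslope
  linarith

section InnerProductSpace

variable {E : Type*} [NormedAddCommGroup E] [InnerProductSpace ℝ E]

theorem real_inner_sub_half_mul_sq_le {β : ℝ} (hβ : 0 < β) (g w : E) :
    ⟪g, w⟫ - β / 2 * ‖w‖ ^ 2 ≤ ‖g‖ ^ 2 / (2 * β) := by
  rw [le_div_iff₀ (by positivity)]
  nlinarith [real_inner_le_norm g w, sq_nonneg (β * ‖w‖ - ‖g‖)]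

variable [CompleteSpace E]

theorem add_inner_gradient_add_sq_le_of_convexOn_sub_sq {ψ : E → ℝ} {β : ℝ} {b : E}
    (hd : DifferentiableAt ℝ ψ b) (hsc : ConvexOn ℝ Set.univ (fun y => ψ y - β / 2 * ‖y‖ ^ 2))
    (a : E) : ψ b + ⟪gradient ψ b, a - b⟫ + β / 2 * ‖a - b‖ ^ 2 ≤ ψ a := by
  have hfd : HasFDerivAt (fun y => ψ y - β / 2 * ‖y‖ ^ 2)
      (InnerProductSpace.toDual ℝ E (gradient ψ b) - (β / 2) • (2 • innerSL ℝ b)) b :=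
    (hasGradientAt_iff_hasFDerivAt.mp hd.hasGradientAt).sub
      ((hasStrictFDerivAt_norm_sq b).hasFDerivAt.const_mul (β / 2))
  have hfirst := hsc.add_fderiv_sub_le hfd a
  have hsq : ‖a - b‖ ^ 2 = ‖a‖ ^ 2 - 2 * ⟪b, a - b⟫ - ‖b‖ ^ 2 := by
    rw [norm_sub_sq_real, inner_sub_right, real_inner_self_eq_norm_sq, real_inner_comm]; ring
  simp only [sub_apply, smul_apply, InnerProductSpace.toDual_apply_apply, innerSL_apply_apply,
    smul_eq_mul, nsmul_eq_mul] at hfirst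
  rw [hsq]
  linarith

theorem inner_sub_le_inner_sub_add_sq_div_of_convexOn_sub_sq {ψ : E → ℝ} {β : ℝ} (hβ : 0 < β)
    (hd : Differentiable ℝ ψ) (hsc : ConvexOn ℝ Set.univ (fun y => ψ y - β / 2 * ‖y‖ ^ 2))
    (x u v : E) :
    ⟪x, v⟫ - ψ v ≤ ⟪x, u⟫ - ψ u + ‖x - gradient ψ u‖ ^ 2 / (2 * β) := by
  have hfirst := add_inner_gradient_add_sq_le_of_convexOn_sub_sq (hd u) hsc v
  have hyoung := real_inner_sub_half_mul_sq_le hβ (x - gradient ψ u) (v - u)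
  rw [inner_sub_left, inner_sub_right x] at hyoung
  linarith

end InnerProductSpace

theorem pointwise_combined_bound_general {D : ℕ} (β B : ℝ) (hβ : 0 < β) (hβB : β ≤ B)
    (ψbd ψd ψdag : EuclideanSpace ℝ (Fin D) → ℝ)
    (hψbd_diff : Differentiable ℝ ψbd)
    (hψbd_sconv : ConvexOn ℝ Set.univ (fun y => ψbd y - β / 2 * ‖y‖ ^ 2)) :
    ∀ x, ⟪x, gradient ψdag x⟫ - ψbd (gradient ψdag x) ≥
      (⟪x, gradient ψd x⟫ - ψbd (gradient ψd x))
        - B / (2 * β ^ 2) * ‖x - gradient ψbd (gradient ψdag x)‖ ^ 2 := by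
  intro x
  have hgap := inner_sub_le_inner_sub_add_sq_div_of_convexOn_sub_sq hβ hψbd_diff hψbd_sconv x
    (gradient ψdag x) (gradient ψd x)
  have hcoeff : 1 / (2 * β) ≤ B / (2 * β ^ 2) := by
    rw [div_le_div_iff₀ (by positivity) (by positivity)]
    nlinarith
  have hscaled := mul_le_mul_of_nonneg_right hcoeff
    (sq_nonneg ‖x - gradient ψbd (gradient ψdag x)‖)
  rw [one_div_mul_eq_div] at hscaled
  linarith

/-- Combined pointwise bound (inequality (21)):
for `ψbd` differentiable convex, `β`-strongly convex and `B`-smooth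
(`0 < β ≤ B`), with differentiable convex conjugate `ψd` having `(1/β)`-Lipschitz
gradient and mutually inverse gradients, and any differentiable `ψdag`,
`⟪x, ∇ψdag x⟫ − ψbd (∇ψdag x) ≥ (⟪x, ∇ψd x⟫ − ψbd (∇ψd x)) − (B/(2β²)) ‖x − ∇ψbd (∇ψdag x)‖²`. -/
theorem pointwise_combined_bound {D : ℕ} (β B : ℝ) (hβ : 0 < β) (hβB : β ≤ B)
    (ψbd ψd ψdag : EuclideanSpace ℝ (Fin D) → ℝ)
    (hψbd_conv : ConvexOn ℝ Set.univ ψbd)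
    (hψbd_diff : Differentiable ℝ ψbd)
    (hψbd_sconv : ConvexOn ℝ Set.univ (fun y => ψbd y - β / 2 * ‖y‖ ^ 2))
    (hψbd_smooth : ∀ x y, ‖gradient ψbd x - gradient ψbd y‖ ≤ B * ‖x - y‖)
    (hψd_diff : Differentiable ℝ ψd)
    (hψd_conj : ∀ x, IsLUB (Set.range fun y => ⟪y, x⟫ - ψbd y) (ψd x))
    (hψd_lip : ∀ x y, ‖gradient ψd x - gradient ψd y‖ ≤ (1 / β) * ‖x - y‖)
    (hinv1 : ∀ x, gradient ψbd (gradient ψd x) = x)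
    (hinv2 : ∀ y, gradient ψd (gradient ψbd y) = y)
    (hψdag_diff : Differentiable ℝ ψdag) :
    ∀ x, ⟪x, gradient ψdag x⟫ - ψbd (gradient ψdag x) ≥
      (⟪x, gradient ψd x⟫ - ψbd (gradient ψd x))
        - B / (2 * β ^ 2) * ‖x - gradient ψbd (gradient ψdag x)‖ ^ 2 :=
  pointwise_combined_bound_general β B hβ hβB ψbd ψd ψdag hψbd_diff hψbd_sconv
end
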